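/- Let Q be the equioriented A₃ quiver 1 ← 2 ← 3. Then in the completed quantum algebra Â_Q one has E(y_{α₁})·E(y_{α₂})·E(y_{α₃}) = E(y_{α₃})·E(y_{α₂+α₃})·E(y_{α₂})·E(y_{α₁+α₂+α₃})·E(y_{α₁+α₂})·E(y_{α₁}), where α_i = e_i. -/
import Mathlib


open scoped BigOperators

/-- A quiver on vertex set `Fin n` with `m` arrows, each arrow `a` having a
tail `ta a` and a head `ha a`. -/
structure Quiv (n : ℕ) where
  m : ℕ
  ta : Fin m → Fin n
  ha : Fin m → Fin n

namespace Quiv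

variable {n : ℕ}

/-- Coerce a dimension vector in `ℕⁿ` to `ℤⁿ`. -/
def toZ {n : ℕ} (γ : Fin n → ℕ) : Fin n → ℤ := fun i => (γ i : ℤ)

/-- The Euler form of the subquiver with vertex set `V` and arrow set `A`. -/
def chiSub (Q : Quiv n) (V : Finset (Fin n)) (A : Finset (Fin Q.m))
    (γ₁ γ₂ : Fin n → ℤ) : ℤ :=
  (∑ i ∈ V, γ₁ i * γ₂ i) - ∑ a ∈ A, γ₁ (Q.ta a) * γ₂ (Q.ha a)

/-- The Euler form `χ` of `Q`. -/
def chi (Q : Quiv n) (γ₁ γ₂ : Fin n → ℤ) : ℤ :=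
  Q.chiSub Finset.univ Finset.univ γ₁ γ₂

/-- `λ(γ₁,γ₂) = χ(γ₂,γ₁) − χ(γ₁,γ₂)`, the antisymmetrized Euler form. -/
def lam (Q : Quiv n) (γ₁ γ₂ : Fin n → ℤ) : ℤ := Q.chi γ₂ γ₁ - Q.chi γ₁ γ₂

/-- `λ_A`, the restriction of `λ` to a subset `A` of the arrows. -/
def lamA (Q : Quiv n) (A : Finset (Fin Q.m)) (γ₁ γ₂ : Fin n → ℤ) : ℤ :=
  ∑ a ∈ A, (γ₁ (Q.ta a) * γ₂ (Q.ha a) - γ₂ (Q.ta a) * γ₁ (Q.ha a))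

/-- No directed cycle using only arrows from `A`. -/
def AcyclicOn (Q : Quiv n) (A : Finset (Fin Q.m)) : Prop :=
  ¬ ∃ (k : ℕ) (c : ZMod (k + 1) → Fin Q.m),
      (∀ i, c i ∈ A) ∧ ∀ i, Q.ha (c i) = Q.ta (c (i + 1))

/-- The quiver `Q` is acyclic: it has no directed cycle. -/
def Acyclic (Q : Quiv n) : Prop := Q.AcyclicOn Finset.univ

/-- Undirected adjacency via an arrow from `A`. -/
def AdjOn (Q : Quiv n) (A : Finset (Fin Q.m)) (x y : Fin n) : Prop :=
  ∃ a ∈ A, (Q.ta a = x ∧ Q.ha a = y) ∨ (Q.ta a = y ∧ Q.ha a = x)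

/-- The subquiver `(V, A)` is connected as an undirected graph. -/
def ConnectedOn (Q : Quiv n) (V : Finset (Fin n)) (A : Finset (Fin Q.m)) : Prop :=
  ∀ x ∈ V, ∀ y ∈ V, Relation.ReflTransGen (Q.AdjOn A) x y

/-- The Tits form of the subquiver `(V,A)` is positive definite. -/
def PosDefOn (Q : Quiv n) (V : Finset (Fin n)) (A : Finset (Fin Q.m)) : Prop :=
  ∀ γ : Fin n → ℤ, (∀ i, i ∉ V → γ i = 0) → γ ≠ 0 → 0 < Q.chiSub V A γ γ

/-- The subquiver `(V,A)` is a (nonempty, connected, acyclic, positive-definite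
Tits form) Dynkin quiver. -/
def DynkinOn (Q : Quiv n) (V : Finset (Fin n)) (A : Finset (Fin Q.m)) : Prop :=
  V.Nonempty ∧ (∀ a ∈ A, Q.ta a ∈ V ∧ Q.ha a ∈ V) ∧
    Q.ConnectedOn V A ∧ Q.AcyclicOn A ∧ Q.PosDefOn V A

/-- The set of positive roots of the subquiver `(V,A)`: nonzero dimension
vectors supported on `V` with `χ(β,β) = 1`. -/
def PosRootsOn (Q : Quiv n) (V : Finset (Fin n)) (A : Finset (Fin Q.m)) :
    Set (Fin n → ℕ) :=
  {β | β ≠ 0 ∧ (∀ i, i ∉ V → β i = 0) ∧ Q.chiSub V A (toZ β) (toZ β) = 1}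

/-- A Dynkin subquiver partition `Q• = {Q¹,…,Q^ℓ}` of `Q`: each block is a
subquiver `(V j, A j)`, the vertex sets partition `Q₀`, and each block is a
nonempty connected Dynkin quiver. -/
structure DSP (Q : Quiv n) (ℓ : ℕ) where
  V : Fin ℓ → Finset (Fin n)
  A : Fin ℓ → Finset (Fin Q.m)
  cover : ∀ i : Fin n, ∃! j, i ∈ V j
  dynkin : ∀ j, Q.DynkinOn (V j) (A j)

/-- Arrows of `Q` not belonging to any block, i.e. arrows of the contracted
quiver `P(Q,Q•)`. -/
def DSP.Cut {Q : Quiv n} {ℓ : ℕ} (P : DSP Q ℓ) (a : Fin Q.m) : Prop :=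
  ∀ j, a ∉ P.A j

/-- `Q•` is admissible: the contracted quiver `P(Q,Q•)` is acyclic, i.e. there
is no cyclic sequence of cut arrows in which the block of the head of each
arrow is the block of the tail of the next one. -/
def DSP.Admissible {Q : Quiv n} {ℓ : ℕ} (P : DSP Q ℓ) : Prop :=
  ¬ ∃ (k : ℕ) (c : ZMod (k + 1) → Fin Q.m),
      (∀ i, P.Cut (c i)) ∧
      ∀ i, ∃ j : Fin ℓ, Q.ha (c i) ∈ P.V j ∧ Q.ta (c (i + 1)) ∈ P.V j

/-- `Q•` is ordered: every cut arrow goes from a higher-indexed block (tail)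
to a lower-indexed block (head). -/
def DSP.Ordered {Q : Quiv n} {ℓ : ℕ} (P : DSP Q ℓ) : Prop :=
  ∀ a : Fin Q.m, P.Cut a →
    ∀ j j' : Fin ℓ, Q.ha a ∈ P.V j → Q.ta a ∈ P.V j' → j < j'

/-- `Φ(Q,Q•) = ∪_j Φ^j`. -/
def DSP.Roots {Q : Quiv n} {ℓ : ℕ} (P : DSP Q ℓ) : Set (Fin n → ℕ) :=
  ⋃ j, Q.PosRootsOn (P.V j) (P.A j)

/-- An allowed total order `φ₁ ≺ ⋯ ≺ φ_r` on `Φ(Q,Q•)`: an enumeration such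
that for `u < v`, `λ(φ_u,φ_v) ≥ 0` if `φ_u, φ_v` lie in the same `Φ^j` and
`λ(φ_u,φ_v) ≤ 0` if they lie in different `Φ^j`'s. -/
def DSP.AllowedOrder {Q : Quiv n} {ℓ : ℕ} (P : DSP Q ℓ) {r : ℕ}
    (φ : Fin r → (Fin n → ℕ)) : Prop :=
  Function.Injective φ ∧ Set.range φ = P.Roots ∧
    ∀ u v : Fin r, u < v →
      ((∃ j, φ u ∈ Q.PosRootsOn (P.V j) (P.A j) ∧
          φ v ∈ Q.PosRootsOn (P.V j) (P.A j)) →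
        0 ≤ Q.lam (toZ (φ u)) (toZ (φ v))) ∧
      ((¬ ∃ j, φ u ∈ Q.PosRootsOn (P.V j) (P.A j) ∧
          φ v ∈ Q.PosRootsOn (P.V j) (P.A j)) →
        Q.lam (toZ (φ u)) (toZ (φ v)) ≤ 0)

end Quiv

noncomputable section

open Quiv

/-- The underlying vector space of the completed quantum algebra `Â_Q`:
functions from dimension vectors to `ℚ(t)`. -/
abbrev AQ (n : ℕ) := (Fin n → ℕ) → RatFunc ℚ

/-- The variable `t = q^{1/2}` of `ℚ(t)`. -/
def tq : RatFunc ℚ := RatFunc.X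

/-- The unit of `Â_Q`: the indicator function of the zero dimension vector. -/
def oneQ {n : ℕ} : AQ n := fun γ => if γ = 0 then 1 else 0

/-- The generator `y_γ = −δ_γ` of the quantum algebra. -/
def yQ {n : ℕ} (γ : Fin n → ℕ) : AQ n := fun δ => if δ = γ then -1 else 0

/-- The twisted convolution product of the quantum algebra:
`(f·g)(γ) = Σ_{γ₁+γ₂=γ} t^{λ(γ₁,γ₂)} f(γ₁) g(γ₂)`. -/
def mulQ {n : ℕ} (Q : Quiv n) (f g : AQ n) : AQ n := fun γ =>
  ∑ γ₁ ∈ Finset.Iic γ,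
    tq ^ (Q.lam (toZ γ₁) (toZ (γ - γ₁))) * f γ₁ * g (γ - γ₁)

/-- Ordered product of a list of elements of `Â_Q`. -/
def prodQ {n : ℕ} (Q : Quiv n) (L : List (AQ n)) : AQ n := L.foldr (mulQ Q) oneQ

/-- Power in the quantum algebra. -/
def powQ {n : ℕ} (Q : Quiv n) (f : AQ n) : ℕ → AQ n
  | 0 => oneQ
  | k + 1 => mulQ Q f (powQ Q f k)

/-- `P_k = Π_{j=1}^k (1 − q^j)⁻¹` with `q = t²`, the Poincaré series of
`H^*(BGL(k,ℂ))`. -/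
def Pq (k : ℕ) : RatFunc ℚ := ∏ j ∈ Finset.Icc 1 k, (1 - tq ^ (2 * j))⁻¹

/-- The quantum dilogarithm `E(y_γ) = 1 + Σ_{k≥1} (−1)^k t^{k²} P_k y_γ^k`,
written out as the function supported on the multiples `k • γ`,
with value `t^{k²} P_k` at `k • γ`  (note `y_γ^k = (−1)^k δ_{kγ}`). -/
def Edl {n : ℕ} (γ : Fin n → ℕ) : AQ n := fun δ =>
  ∑ k ∈ Finset.range ((∑ i, δ i) + 1),
    if δ = k • γ then tq ^ (k ^ 2) * Pq k else 0

end

/-- The equioriented `A₃` quiver `1 ← 2 ← 3` (vertices `0,1,2` of `Fin 3`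
standing for `1,2,3`): arrows `2 → 1` and `3 → 2`. -/
def QA3 : Quiv 3 := ⟨2, ![1, 2], ![0, 1]⟩

open Finset Quiv

noncomputable section S10

lemma tq_ne : (tq : RatFunc ℚ) ≠ 0 := RatFunc.X_ne_zero

lemma q_pow_ne_one (b : ℕ) (hb : b ≠ 0) : (tq : RatFunc ℚ) ^ (2*b) ≠ 1 := by
  intro h
  have hX : ((Polynomial.X : Polynomial ℚ) ^ (2*b)) = 1 := by
    apply IsFractionRing.injective (Polynomial ℚ) (RatFunc ℚ)
    simpa [tq, RatFunc.algebraMap_X, map_pow] using h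
  have := congrArg Polynomial.natDegree hX
  simp [Polynomial.natDegree_X_pow] at this
  omega

lemma one_sub_q_ne (b : ℕ) (hb : b ≠ 0) : (1 : RatFunc ℚ) - tq ^ (2*b) ≠ 0 := by
  intro h
  exact q_pow_ne_one b hb (by linear_combination -h)

lemma Pq_zero : Pq 0 = 1 := by simp [Pq]

lemma Pq_succ_mul (k : ℕ) : Pq (k+1) * (1 - tq^(2*(k+1))) = Pq k := by
  unfold Pq
  rw [Finset.prod_Icc_succ_top (by omega : 1 ≤ k+1), mul_assoc,
    inv_mul_cancel₀ (one_sub_q_ne (k+1) (by omega)), mul_one]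

/-- the generic term of the Durfee-square sum -/
def tmf (a b k : ℕ) : RatFunc ℚ :=
  tq^(2*((a-k)*(b-k))) * (Pq (a-k) * (Pq k * Pq (b-k)))

def fAB (a b : ℕ) : RatFunc ℚ := ∑ k ∈ range (min a b + 1), tmf a b k

lemma tmf_key (a b k : ℕ) (hk : k ≤ min a b + 1) :
    tmf (a+1) (b+1) k =
      tq^(2*(b+1)) * tmf (a+1) (b+1) k
      + tq^(2*(a+1)) * (if k ∈ range (min (a+1) b + 1) then tmf (a+1) b k else 0)
      + (if k = 0 then 0 else tmf a b (k-1)) := by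
  by_cases hkb : k ≤ min (a+1) b
  · rw [if_pos (Finset.mem_range.mpr (by omega))]
    rcases k with _ | j
    · simp only [tmf, Nat.sub_zero]
      rw [if_pos trivial, add_zero]
      have hb : Pq (b+1) * (1 - tq^(2*(b+1))) = Pq b := Pq_succ_mul b
      simp only [Pq_zero]
      linear_combination (tq^(2*(a+1)) * tq^(2*((a+1)*b)) * Pq (a+1)) * hb
    · rw [if_neg (by omega)]
      have hja : j ≤ a := by omega
      have hjb : j + 1 ≤ b := by omega
      obtain ⟨A, hA⟩ : ∃ A, a = A + j := ⟨a - j, by omega⟩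
      obtain ⟨B, hB⟩ : ∃ B, b = B + (j+1) := ⟨b - (j+1), by omega⟩
      subst hA hB
      have e1 : A + j + 1 - (j+1) = A := by omega
      have e2 : B + (j+1) + 1 - (j+1) = B+1 := by omega
      have e3 : B + (j+1) - (j+1) = B := by omega
      have e4 : A + j - j = A := by omega
      have e5 : B + (j+1) - j = B+1 := by omega
      have e6 : j + 1 - 1 = j := by omega
      simp only [tmf, e1, e2, e3, Nat.add_sub_cancel, e4, e5, e6]
      have h1 : Pq (B+1) * (1 - tq^(2*(B+1))) = Pq B := Pq_succ_mul B
      have h2 : Pq (j+1) * (1 - tq^(2*(j+1))) = Pq j := Pq_succ_mul j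
      linear_combination (tq^(2*(A+j+1)) * tq^(2*(A*B)) * Pq A * Pq (j+1)) * h1 +
        (tq^(2*(A*(B+1))) * Pq A * Pq (B+1)) * h2
  · -- here b ≤ a and k = b+1
    have hba : b ≤ a := by omega
    have hk' : k = b + 1 := by omega
    subst hk'
    rw [if_neg (by simp only [Finset.mem_range]; omega), if_neg (by omega)]
    have e1 : a + 1 - (b+1) = a - b := by omega
    have e2 : b + 1 - (b+1) = 0 := by omega
    have e3 : b + 1 - 1 = b := by omega
    have e4 : a - (b+1-1) = a - b := by omega
    have e5 : b - (b+1-1) = 0 := by omega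
    simp only [tmf, e1, e2, e3, e4, e5, Nat.sub_self, mul_zero, zero_mul, pow_zero, one_mul]
    have hb : Pq (b+1) * (1 - tq^(2*(b+1))) = Pq b := Pq_succ_mul b
    linear_combination (Pq (a-b) * Pq 0) * hb

lemma fAB_rec (a b : ℕ) :
    fAB (a+1) (b+1) = tq^(2*(b+1)) * fAB (a+1) (b+1)
      + tq^(2*(a+1)) * fAB (a+1) b + fAB a b := by
  have hmin : min (a+1) (b+1) = min a b + 1 := by omega
  have step : fAB (a+1) (b+1) =
      ∑ k ∈ range (min a b + 2),
        (tq^(2*(b+1)) * tmf (a+1) (b+1) k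
        + tq^(2*(a+1)) * (if k ∈ range (min (a+1) b + 1) then tmf (a+1) b k else 0)
        + (if k = 0 then 0 else tmf a b (k-1))) := by
    rw [fAB, hmin]
    refine Finset.sum_congr rfl fun k hk => tmf_key a b k ?_
    simp only [Finset.mem_range] at hk; omega
  have h1 : ∑ k ∈ range (min a b + 2), tq^(2*(b+1)) * tmf (a+1) (b+1) k
      = tq^(2*(b+1)) * fAB (a+1) (b+1) := by
    rw [← Finset.mul_sum, fAB, hmin]
  have h2 : ∑ k ∈ range (min a b + 2),
      (tq^(2*(a+1)) * (if k ∈ range (min (a+1) b + 1) then tmf (a+1) b k else 0))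
      = tq^(2*(a+1)) * fAB (a+1) b := by
    rw [← Finset.mul_sum, Finset.sum_ite_mem,
      Finset.inter_eq_right.mpr (Finset.range_subset_range.mpr (by omega)), fAB]
  have h3 : ∑ k ∈ range (min a b + 2),
      (if k = 0 then 0 else tmf a b (k-1)) = fAB a b := by
    rw [Finset.sum_range_succ']
    simp [fAB]
  conv_lhs => rw [step]
  rw [Finset.sum_add_distrib, Finset.sum_add_distrib, h1, h2, h3]

lemma fAB_eq : ∀ b a, fAB a b = Pq a * Pq b := by
  intro b
  induction b with
  | zero =>
    intro a
    simp [fAB, tmf, Pq_zero]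
  | succ b ih =>
    intro a
    rcases a with _ | a
    · simp [fAB, tmf, Pq_zero]
    · have h := fAB_rec a b
      rw [ih (a+1), ih a] at h
      have hc : fAB (a+1) (b+1) * (1 - tq^(2*(b+1))) =
          (Pq (a+1) * Pq (b+1)) * (1 - tq^(2*(b+1))) := by
        have ha : Pq (a+1) * (1 - tq^(2*(a+1))) = Pq a := Pq_succ_mul a
        have hb : Pq (b+1) * (1 - tq^(2*(b+1))) = Pq b := Pq_succ_mul b
        linear_combination h - Pq (a+1) * hb - Pq b * ha
      exact mul_right_cancel₀ (one_sub_q_ne (b+1) (by omega)) hc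

end S10
-- ## bilinearity of lam, toZ lemmas, pi-order helpers

section Bilin
variable {n : ℕ}

lemma pi_sub_add_cancel {x y : Fin n → ℕ} (h : x ≤ y) : x + (y - x) = y := by
  funext i
  have hh : x i ≤ y i := h i
  simp only [Pi.add_apply, Pi.sub_apply]
  omega

lemma toZ_sub {x y : Fin n → ℕ} (h : y ≤ x) : toZ (x - y) = toZ x - toZ y := by
  funext i
  have hh : y i ≤ x i := h i
  simp only [Quiv.toZ, Pi.sub_apply]
  omega

lemma toZ_add (x y : Fin n → ℕ) : toZ (x + y) = toZ x + toZ y := by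
  funext i; simp [Quiv.toZ]

lemma toZ_natsmul (k : ℕ) (γ : Fin n → ℕ) : toZ (k • γ) = (k : ℤ) • toZ γ := by
  funext i; simp [Quiv.toZ, mul_comm]

lemma chi_add_left (Q : Quiv n) (x y z : Fin n → ℤ) :
    Q.chi (x + y) z = Q.chi x z + Q.chi y z := by
  simp only [Quiv.chi, Quiv.chiSub, Pi.add_apply, add_mul,
    Finset.sum_add_distrib]
  ring

lemma chi_add_right (Q : Quiv n) (x y z : Fin n → ℤ) :
    Q.chi x (y + z) = Q.chi x y + Q.chi x z := by
  simp only [Quiv.chi, Quiv.chiSub, Pi.add_apply, mul_add,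
    Finset.sum_add_distrib]
  ring

lemma chi_smul_left (Q : Quiv n) (c : ℤ) (x y : Fin n → ℤ) :
    Q.chi (c • x) y = c * Q.chi x y := by
  simp only [Quiv.chi, Quiv.chiSub, Pi.smul_apply, smul_eq_mul, mul_assoc,
    ← Finset.mul_sum, mul_sub]

lemma chi_smul_right (Q : Quiv n) (c : ℤ) (x y : Fin n → ℤ) :
    Q.chi x (c • y) = c * Q.chi x y := by
  simp only [Quiv.chi, Quiv.chiSub, Pi.smul_apply, smul_eq_mul,
    mul_left_comm _ c, ← Finset.mul_sum, mul_sub]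

lemma lam_add_left (Q : Quiv n) (x y z : Fin n → ℤ) :
    Q.lam (x + y) z = Q.lam x z + Q.lam y z := by
  simp only [Quiv.lam, chi_add_left, chi_add_right]; ring

lemma lam_add_right (Q : Quiv n) (x y z : Fin n → ℤ) :
    Q.lam x (y + z) = Q.lam x y + Q.lam x z := by
  simp only [Quiv.lam, chi_add_left, chi_add_right]; ring

lemma lam_smul_left (Q : Quiv n) (c : ℤ) (x y : Fin n → ℤ) :
    Q.lam (c • x) y = c * Q.lam x y := by
  simp only [Quiv.lam, chi_smul_left, chi_smul_right]; ring

lemma lam_smul_right (Q : Quiv n) (c : ℤ) (x y : Fin n → ℤ) :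
    Q.lam x (c • y) = c * Q.lam x y := by
  simp only [Quiv.lam, chi_smul_left, chi_smul_right]; ring

lemma lam_self (Q : Quiv n) (x : Fin n → ℤ) : Q.lam x x = 0 := by
  simp [Quiv.lam]

lemma lam_antisymm (Q : Quiv n) (x y : Fin n → ℤ) : Q.lam x y = - Q.lam y x := by
  simp only [Quiv.lam]; ring

lemma lam_cocycle (Q : Quiv n) (A B C : Fin n → ℤ) :
    Q.lam (A + B) C + Q.lam A B = Q.lam A (B + C) + Q.lam B C := by
  simp only [lam_add_left, lam_add_right]; ring

end Bilin

-- ## associativity of mulQ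

section Assoc
variable {n : ℕ}

lemma mulQ_assoc (Q : Quiv n) (f g h : AQ n) :
    mulQ Q (mulQ Q f g) h = mulQ Q f (mulQ Q g h) := by
  funext γ
  simp only [mulQ, Finset.mul_sum, Finset.sum_mul]
  rw [Finset.sum_sigma', Finset.sum_sigma']
  refine Finset.sum_nbij' (fun p => ⟨p.2, p.1 - p.2⟩) (fun p => ⟨p.1 + p.2, p.1⟩)
    ?_ ?_ ?_ ?_ ?_
  · rintro ⟨δ, α⟩ hp
    simp only [Finset.mem_sigma, Finset.mem_Iic] at hp ⊢
    exact ⟨le_trans hp.2 hp.1, fun i => by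
      have h1 : δ i ≤ γ i := hp.1 i; have h2 : α i ≤ δ i := hp.2 i
      simp only [Pi.sub_apply]; omega⟩
  · rintro ⟨α, β⟩ hp
    simp only [Finset.mem_sigma, Finset.mem_Iic] at hp ⊢
    constructor
    · intro i
      have h1 : α i ≤ γ i := hp.1 i; have h2 : β i ≤ (γ - α) i := hp.2 i
      simp only [Pi.add_apply, Pi.sub_apply] at *
      omega
    · intro i
      have h1 : α i ≤ γ i := hp.1 i
      simp only [Pi.add_apply]; omega
  · rintro ⟨δ, α⟩ hp
    simp only [Finset.mem_sigma, Finset.mem_Iic] at hp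
    have : α + (δ - α) = δ := pi_sub_add_cancel hp.2
    simp [this]
  · rintro ⟨α, β⟩ hp
    simp only [Finset.mem_sigma, Finset.mem_Iic] at hp
    have : α + β - α = β := by funext i; simp only [Pi.add_apply, Pi.sub_apply]; omega
    simp [this]
  · rintro ⟨δ, α⟩ hp
    simp only [Finset.mem_sigma, Finset.mem_Iic] at hp
    have hαγ : α ≤ γ := le_trans hp.2 hp.1
    have e1 : γ - α - (δ - α) = γ - δ := by
      funext i
      have h1 : δ i ≤ γ i := hp.1 i; have h2 : α i ≤ δ i := hp.2 i
      simp only [Pi.sub_apply]; omega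
    have key : Q.lam (toZ δ) (toZ γ - toZ δ) + Q.lam (toZ α) (toZ δ - toZ α)
        = Q.lam (toZ α) (toZ γ - toZ α) + Q.lam (toZ δ - toZ α) (toZ γ - toZ δ) := by
      have hc := lam_cocycle Q (toZ α) (toZ δ - toZ α) (toZ γ - toZ δ)
      rw [show toZ α + (toZ δ - toZ α) = toZ δ by ring,
        show toZ δ - toZ α + (toZ γ - toZ δ) = toZ γ - toZ α by ring] at hc
      linarith
    simp only
    rw [e1, toZ_sub hp.1, toZ_sub hp.2, toZ_sub hαγ]
    calc tq ^ Q.lam (toZ δ) (toZ γ - toZ δ) *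
          (tq ^ Q.lam (toZ α) (toZ δ - toZ α) * f α * g (δ - α)) * h (γ - δ)
        = tq ^ (Q.lam (toZ δ) (toZ γ - toZ δ) + Q.lam (toZ α) (toZ δ - toZ α)) *
          (f α * g (δ - α) * h (γ - δ)) := by
          rw [zpow_add₀ tq_ne]; ring
      _ = tq ^ Q.lam (toZ α) (toZ γ - toZ α) * f α *
          (tq ^ Q.lam (toZ δ - toZ α) (toZ γ - toZ δ) * g (δ - α) * h (γ - δ)) := by
          rw [key, zpow_add₀ tq_ne]; ring

end Assoc
-- ## evaluation of Edl and products

section Eval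
variable {n : ℕ}

lemma smul_vec_inj {δ : Fin n → ℕ} (hδ : δ ≠ 0) {m m' : ℕ} (h : m • δ = m' • δ) :
    m = m' := by
  obtain ⟨i0, hi0⟩ : ∃ i, δ i ≠ 0 := by
    by_contra hc; push_neg at hc; exact hδ (funext fun i => hc i)
  have h2 : m * δ i0 = m' * δ i0 := congrFun h i0
  exact Nat.eq_of_mul_eq_mul_right (Nat.pos_of_ne_zero hi0) h2

lemma Edl_apply_smul {γ : Fin n → ℕ} (hγ : γ ≠ 0) (k : ℕ) :
    Edl γ (k • γ) = tq ^ (k^2) * Pq k := by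
  obtain ⟨i0, hi0⟩ : ∃ i, γ i ≠ 0 := by
    by_contra hc; push_neg at hc; exact hγ (funext fun i => hc i)
  unfold Edl
  rw [Finset.sum_eq_single k]
  · rw [if_pos rfl]
  · intro j _ hne
    exact if_neg fun hEq => hne (smul_vec_inj hγ hEq.symm)
  · intro hk
    exfalso
    apply hk
    rw [Finset.mem_range]
    have h1 : (∑ i, (k • γ) i) = k * ∑ i, γ i := by
      simp [Finset.mul_sum]
    have h2 : γ i0 ≤ ∑ i, γ i :=
      Finset.single_le_sum (fun i _ => Nat.zero_le (γ i)) (Finset.mem_univ i0)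
    have h4 : 1 ≤ ∑ i, γ i := by omega
    have h3 : k ≤ k * ∑ i, γ i := Nat.le_mul_of_pos_right k (by omega)
    omega

lemma Edl_apply_zero {γ δ : Fin n → ℕ} (h : ∀ k : ℕ, δ ≠ k • γ) : Edl γ δ = 0 := by
  unfold Edl
  exact Finset.sum_eq_zero fun k _ => if_neg (h k)

lemma Edl_ne_zero {γ δ : Fin n → ℕ} (h : Edl γ δ ≠ 0) : ∃ k : ℕ, δ = k • γ := by
  by_contra hc; push_neg at hc; exact h (Edl_apply_zero hc)

/-- `γ, δ` are independent over `ℕ`. -/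
def Indep2 (γ δ : Fin n → ℕ) : Prop :=
  ∀ k l k' l' : ℕ, k • γ + l • δ = k' • γ + l' • δ → k = k' ∧ l = l'

lemma Indep2.left_ne {γ δ : Fin n → ℕ} (h : Indep2 γ δ) : γ ≠ 0 := by
  intro h0
  have he : (1:ℕ) • γ + (0:ℕ) • δ = (0:ℕ) • γ + (0:ℕ) • δ := by rw [h0]; simp
  have := (h 1 0 0 0 he).1
  omega

lemma Indep2.right_ne {γ δ : Fin n → ℕ} (h : Indep2 γ δ) : δ ≠ 0 := by
  intro h0
  have he : (0:ℕ) • γ + (1:ℕ) • δ = (0:ℕ) • γ + (0:ℕ) • δ := by rw [h0]; simp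
  have := (h 0 1 0 0 he).2
  omega

lemma Indep2.symm {γ δ : Fin n → ℕ} (h : Indep2 γ δ) : Indep2 δ γ := by
  intro k l k' l' he
  have he2 : l • γ + k • δ = l' • γ + k' • δ := by
    rw [add_comm (l • γ), add_comm (l' • γ)]; exact he
  have := h l k l' k' he2
  exact ⟨this.2, this.1⟩

lemma smul_le_sum {k l m : ℕ} (hm : m ≤ l) (γ δ : Fin n → ℕ) :
    m • δ ≤ k • γ + l • δ := by
  intro i
  simp only [Pi.add_apply, Pi.smul_apply, smul_eq_mul]
  have : m * δ i ≤ l * δ i := Nat.mul_le_mul_right _ hm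
  exact le_trans this (Nat.le_add_left _ _)

lemma mul2_apply (Q : Quiv n) {γ δ : Fin n → ℕ} (h : Indep2 γ δ) (k l : ℕ) :
    mulQ Q (Edl γ) (Edl δ) (k • γ + l • δ) =
      tq ^ (Q.lam (toZ (k • γ)) (toZ (l • δ))) *
        ((tq ^ (k^2) * Pq k) * (tq ^ (l^2) * Pq l)) := by
  unfold mulQ
  rw [Finset.sum_eq_single_of_mem (k • γ) (Finset.mem_Iic.mpr
    (by rw [add_comm]; exact smul_le_sum le_rfl δ γ))]
  · rw [add_tsub_cancel_left, Edl_apply_smul h.left_ne, Edl_apply_smul h.right_ne]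
    ring
  · intro ε₁ hmem hne
    rcases eq_or_ne (Edl γ ε₁) 0 with h0 | h0
    · rw [h0]; ring
    obtain ⟨k', rfl⟩ := Edl_ne_zero h0
    rcases eq_or_ne (Edl δ (k • γ + l • δ - k' • γ)) 0 with h1 | h1
    · rw [h1]; ring
    obtain ⟨l', he⟩ := Edl_ne_zero h1
    exfalso
    have hle : k' • γ ≤ k • γ + l • δ := Finset.mem_Iic.mp hmem
    have heq : k • γ + l • δ = k' • γ + l' • δ := by
      rw [← he]
      exact (pi_sub_add_cancel hle).symm
    exact hne (by rw [(h k l k' l' heq).1])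

lemma mul2_apply_zero (Q : Quiv n) {γ δ : Fin n → ℕ} (ε : Fin n → ℕ)
    (h : ∀ k l : ℕ, ε ≠ k • γ + l • δ) : mulQ Q (Edl γ) (Edl δ) ε = 0 := by
  unfold mulQ
  refine Finset.sum_eq_zero fun ε₁ hmem => ?_
  rcases eq_or_ne (Edl γ ε₁) 0 with h0 | h0
  · rw [h0]; ring
  obtain ⟨k, rfl⟩ := Edl_ne_zero h0
  rcases eq_or_ne (Edl δ (ε - k • γ)) 0 with h1 | h1
  · rw [h1]; ring
  obtain ⟨l, he⟩ := Edl_ne_zero h1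
  exfalso
  have hle : k • γ ≤ ε := Finset.mem_Iic.mp hmem
  exact h k l (by rw [← he]; exact (pi_sub_add_cancel hle).symm)

lemma mul2_ne_zero (Q : Quiv n) {γ δ ε : Fin n → ℕ}
    (h : mulQ Q (Edl γ) (Edl δ) ε ≠ 0) : ∃ k l : ℕ, ε = k • γ + l • δ := by
  by_contra hc
  push_neg at hc
  exact h (mul2_apply_zero Q ε hc)

lemma mulQ_oneQ (Q : Quiv n) (f : AQ n) : mulQ Q f oneQ = f := by
  funext γ
  unfold mulQ oneQ
  rw [Finset.sum_eq_single_of_mem γ (Finset.mem_Iic.mpr le_rfl)]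
  · have hz : γ - γ = 0 := by funext i; simp
    have ht : toZ (0 : Fin n → ℕ) = 0 := by funext i; simp [Quiv.toZ]
    have hl : Q.lam (toZ γ) 0 = 0 := by
      have := lam_smul_right Q 0 (toZ γ) 0
      simpa using this
    rw [hz, ht, hl]
    simp
  · intro ε₁ hmem hne
    have hle : ε₁ ≤ γ := Finset.mem_Iic.mp hmem
    rw [if_neg, mul_zero]
    intro hc
    apply hne
    funext i
    have h1 : ε₁ i ≤ γ i := hle i
    have h2 : γ i - ε₁ i = 0 := congrFun hc i
    omega

end Eval

-- ## pi vector identities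

section PiVec
variable {n : ℕ}

lemma piL1 (k j M : ℕ) (γ δ : Fin n → ℕ) :
    k • γ + (j + M) • δ - M • δ = k • γ + j • δ := by
  rw [add_smul, ← add_assoc]
  exact add_tsub_cancel_right _ _

lemma piL2 (j P : ℕ) (γ δ : Fin n → ℕ) :
    (j + P) • γ + j • δ = j • (γ + δ) + P • γ := by
  rw [add_smul, smul_add]; abel

lemma piL1' (k l x : ℕ) (hx : x ≤ l) (γ δ : Fin n → ℕ) :
    k • γ + l • δ - (l - x) • δ = k • γ + x • δ := by
  obtain ⟨M, rfl⟩ : ∃ M, l = x + M := ⟨l - x, by omega⟩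
  rw [show x + M - x = M by omega]
  exact piL1 k x M γ δ

lemma piL3 (m p q : ℕ) (γ δ : Fin n → ℕ) :
    m • δ + (p • (γ + δ) + q • γ) = (p + q) • γ + (m + p) • δ := by
  rw [smul_add, add_smul, add_smul]; abel

end PiVec
-- ## commuting quantum dilogarithms

section Comm
variable {n : ℕ}

lemma Edl_commute (Q : Quiv n) {γ δ : Fin n → ℕ} (h : Indep2 γ δ)
    (hlam : Q.lam (toZ γ) (toZ δ) = 0) :
    mulQ Q (Edl γ) (Edl δ) = mulQ Q (Edl δ) (Edl γ) := by
  funext ε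
  by_cases hex : ∃ k l : ℕ, ε = k • γ + l • δ
  · obtain ⟨k, l, rfl⟩ := hex
    rw [mul2_apply Q h k l]
    rw [show k • γ + l • δ = l • δ + k • γ from add_comm _ _]
    rw [mul2_apply Q h.symm l k]
    have h1 : Q.lam (toZ (k • γ)) (toZ (l • δ)) = 0 := by
      rw [toZ_natsmul, toZ_natsmul, lam_smul_left, lam_smul_right, hlam]; ring
    have h2 : Q.lam (toZ (l • δ)) (toZ (k • γ)) = 0 := by
      rw [toZ_natsmul, toZ_natsmul, lam_smul_left, lam_smul_right,
        lam_antisymm, hlam]; ring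
    rw [h1, h2]; ring
  · push_neg at hex
    rw [mul2_apply_zero Q _ hex,
      mul2_apply_zero Q _ (fun k l hne => hex l k (by rw [hne, add_comm]))]

end Comm

-- ## the pentagon identity

section Pent
variable {n : ℕ}

lemma Edl_pentagon (Q : Quiv n) {γ δ : Fin n → ℕ} (h : Indep2 γ δ)
    (hlam : Q.lam (toZ γ) (toZ δ) = -1) :
    mulQ Q (Edl γ) (Edl δ) =
      mulQ Q (Edl δ) (mulQ Q (Edl (γ + δ)) (Edl γ)) := by
  have hγ : γ ≠ 0 := h.left_ne
  have hδ : δ ≠ 0 := h.right_ne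
  have hdg : Q.lam (toZ δ) (toZ γ) = 1 := by
    rw [lam_antisymm, hlam]; ring
  have hgd : Indep2 (γ + δ) γ := by
    intro k l k' l' he
    have he' : (k + l) • γ + k • δ = (k' + l') • γ + k' • δ := by
      have e1 : ∀ a b : ℕ, a • (γ + δ) + b • γ = (a + b) • γ + a • δ := by
        intro a b; rw [smul_add, add_smul]; abel
      rw [← e1, ← e1]; exact he
    obtain ⟨h1, h2⟩ := h (k + l) k (k' + l') k' he'
    omega
  funext ε
  set G := mulQ Q (Edl (γ + δ)) (Edl γ) with hGdef
  by_cases hex : ∃ k l : ℕ, ε = k • γ + l • δ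
  · obtain ⟨k, l, rfl⟩ := hex
    rw [mul2_apply Q h k l]
    show _ = mulQ Q (Edl δ) G (k • γ + l • δ)
    unfold mulQ
    -- restrict the sum to multiples of δ
    have himg : (Finset.range (l+1)).image (fun m => m • δ) ⊆
        Finset.Iic (k • γ + l • δ) := by
      intro x hx
      obtain ⟨m, hm, rfl⟩ := Finset.mem_image.mp hx
      exact Finset.mem_Iic.mpr (smul_le_sum (by
        simp only [Finset.mem_range] at hm; omega) γ δ)
    have hzero : ∀ x ∈ Finset.Iic (k • γ + l • δ),
        x ∉ (Finset.range (l+1)).image (fun m => m • δ) →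
        tq ^ Q.lam (toZ x) (toZ (k • γ + l • δ - x)) * Edl δ x *
          G (k • γ + l • δ - x) = 0 := by
      intro x hx hni
      rcases eq_or_ne (Edl δ x) 0 with h0 | h0
      · rw [h0]; ring
      obtain ⟨m, rfl⟩ := Edl_ne_zero h0
      rcases eq_or_ne (G (k • γ + l • δ - m • δ)) 0 with h1 | h1
      · rw [h1, mul_zero]
      obtain ⟨p, q, he⟩ := mul2_ne_zero Q (hGdef ▸ h1)
      exfalso
      have hle : m • δ ≤ k • γ + l • δ := Finset.mem_Iic.mp hx
      have heq : k • γ + l • δ = (p + q) • γ + (m + p) • δ := by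
        rw [← piL3, ← he]
        exact (pi_sub_add_cancel hle).symm
      obtain ⟨e1, e2⟩ := h k l (p + q) (m + p) heq
      exact hni (Finset.mem_image.mpr ⟨m, Finset.mem_range.mpr (by omega), rfl⟩)
    rw [← Finset.sum_subset himg hzero]
    rw [Finset.sum_image (fun a _ b _ hab => smul_vec_inj hδ hab)]
    rw [← Finset.sum_range_reflect]
    simp only [Nat.add_sub_cancel]
    -- truncate to range (min k l + 1)
    have hsub : Finset.range (min k l + 1) ⊆ Finset.range (l + 1) :=
      Finset.range_subset_range.mpr (by omega)
    have hvan : ∀ x ∈ Finset.range (l + 1), x ∉ Finset.range (min k l + 1) →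
        tq ^ Q.lam (toZ ((l - x) • δ)) (toZ (k • γ + l • δ - (l - x) • δ)) *
          Edl δ ((l - x) • δ) * G (k • γ + l • δ - (l - x) • δ) = 0 := by
      intro x hx hnx
      simp only [Finset.mem_range] at hx hnx
      have hxl : x ≤ l := by omega
      have hxk : k < x := by omega
      rw [piL1' k l x hxl]
      have hG0 : G (k • γ + x • δ) = 0 := by
        rw [hGdef]
        apply mul2_apply_zero
        intro p q hc
        have hc2 : k • γ + x • δ = (p + q) • γ + p • δ := by
          rw [hc, smul_add, add_smul]; abel
        obtain ⟨e1, e2⟩ := h k x (p + q) p hc2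
        omega
      rw [hG0, mul_zero]
    rw [← Finset.sum_subset hsub hvan]
    have hA3 : Q.lam (toZ (k • γ)) (toZ (l • δ)) = -((k:ℤ) * l) := by
      rw [toZ_natsmul, toZ_natsmul, lam_smul_left, lam_smul_right, hlam]; ring
    have hPP : Pq k * Pq l = ∑ j ∈ Finset.range (min k l + 1), tmf k l j := by
      rw [← fAB]; exact (fAB_eq l k).symm
    rw [hA3, show (tq ^ (k^2) * Pq k) * (tq ^ (l^2) * Pq l)
        = tq ^ (k^2) * (tq ^ (l^2) * (Pq k * Pq l)) from by ring, hPP,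
      Finset.mul_sum, Finset.mul_sum, Finset.mul_sum]
    refine Finset.sum_congr rfl fun j hj => ?_
    simp only [Finset.mem_range] at hj
    have hjk : j ≤ k := by omega
    have hjl : j ≤ l := by omega
    rw [piL1' k l j hjl]
    obtain ⟨P, rfl⟩ : ∃ P, k = j + P := ⟨k - j, by omega⟩
    obtain ⟨M, rfl⟩ : ∃ M, l = j + M := ⟨l - j, by omega⟩
    simp only [tmf, Nat.add_sub_cancel_left]
    rw [piL2 j P γ δ]
    rw [hGdef, mul2_apply Q hgd j P]
    rw [Edl_apply_smul hδ M]
    have hE1 : Q.lam (toZ (M • δ)) (toZ (j • (γ + δ) + P • γ))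
        = (M:ℤ) * j + (M:ℤ) * P := by
      simp only [toZ_add, toZ_natsmul, lam_smul_left, lam_smul_right, lam_add_left,
        lam_add_right, lam_self, hdg, hlam]
      ring
    have hE2 : Q.lam (toZ (j • (γ + δ))) (toZ (P • γ)) = (j:ℤ) * P := by
      simp only [toZ_add, toZ_natsmul, lam_smul_left, lam_smul_right, lam_add_left,
        lam_add_right, lam_self, hdg, hlam]
      ring
    rw [hE1, hE2]
    trans (tq ^ ((-((((j+P):ℕ):ℤ) * (((j+M):ℕ):ℤ))) + (((j+P)^2:ℕ):ℤ)
        + (((j+M)^2:ℕ):ℤ) + ((2*(P*M):ℕ):ℤ)) * (Pq P * (Pq j * Pq M)))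
    · simp only [← zpow_natCast (tq : RatFunc ℚ), zpow_add₀ tq_ne]
      ring
    · rw [show (-((((j+P):ℕ):ℤ) * (((j+M):ℕ):ℤ))) + (((j+P)^2:ℕ):ℤ)
          + (((j+M)^2:ℕ):ℤ) + ((2*(P*M):ℕ):ℤ)
          = ((M:ℤ) * j + (M:ℤ) * P) + ((M^2:ℕ):ℤ) + ((j:ℤ) * P)
            + ((j^2:ℕ):ℤ) + ((P^2:ℕ):ℤ) from by push_cast; ring]
      simp only [← zpow_natCast (tq : RatFunc ℚ), zpow_add₀ tq_ne]
      ring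
  · push_neg at hex
    rw [mul2_apply_zero Q _ hex]
    symm
    show mulQ Q (Edl δ) G _ = 0
    unfold mulQ
    refine Finset.sum_eq_zero fun ε₁ hmem => ?_
    rcases eq_or_ne (Edl δ ε₁) 0 with h0 | h0
    · rw [h0]; ring
    obtain ⟨m, rfl⟩ := Edl_ne_zero h0
    rcases eq_or_ne (G (ε - m • δ)) 0 with h1 | h1
    · rw [h1, mul_zero]
    obtain ⟨p, q, he⟩ := mul2_ne_zero Q (hGdef ▸ h1)
    exfalso
    have hle : m • δ ≤ ε := Finset.mem_Iic.mp hmem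
    exact hex (p + q) (m + p) (by
      rw [← piL3, ← he]
      exact (pi_sub_add_cancel hle).symm)

end Pent
-- ## concrete facts for QA3 and the final assembly

section A3

theorem statement10' :
    prodQ QA3 [Edl ![1, 0, 0], Edl ![0, 1, 0], Edl ![0, 0, 1]] =
      prodQ QA3 [Edl ![0, 0, 1], Edl ![0, 1, 1], Edl ![0, 1, 0],
        Edl ![1, 1, 1], Edl ![1, 1, 0], Edl ![1, 0, 0]] := by
  have i23 : Indep2 (![0,1,0] : Fin 3 → ℕ) ![0,0,1] := by
    intro k l k' l' hEq
    have h1 := congrFun hEq 1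
    have h2 := congrFun hEq 2
    simp at h1 h2
    exact ⟨h1, h2⟩
  have i12 : Indep2 (![1,0,0] : Fin 3 → ℕ) ![0,1,0] := by
    intro k l k' l' hEq
    have h0 := congrFun hEq 0
    have h1 := congrFun hEq 1
    simp at h0 h1
    exact ⟨h0, h1⟩
  have i13 : Indep2 (![1,0,0] : Fin 3 → ℕ) ![0,0,1] := by
    intro k l k' l' hEq
    have h0 := congrFun hEq 0
    have h2 := congrFun hEq 2
    simp at h0 h2
    exact ⟨h0, h2⟩
  have i123 : Indep2 (![1,0,0] : Fin 3 → ℕ) (![0,1,0] + ![0,0,1]) := by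
    intro k l k' l' hEq
    have h0 := congrFun hEq 0
    have h1 := congrFun hEq 1
    simp at h0 h1
    exact ⟨h0, h1⟩
  have iT2 : Indep2 ((![1,0,0] : Fin 3 → ℕ) + (![0,1,0] + ![0,0,1])) ![0,1,0] := by
    intro k l k' l' hEq
    have h0 := congrFun hEq 0
    have h1 := congrFun hEq 1
    simp at h0 h1
    constructor
    · exact h0
    · omega
  have p23 := Edl_pentagon QA3 i23 (by decide)
  have p12 := Edl_pentagon QA3 i12 (by decide)
  have p123 := Edl_pentagon QA3 i123 (by decide)
  have c13 := Edl_commute QA3 i13 (by decide)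
  have cT2 := Edl_commute QA3 iT2 (by decide)
  simp only [prodQ, List.foldr_cons, List.foldr_nil]
  rw [mulQ_oneQ, mulQ_oneQ]
  rw [show (![0,1,1] : Fin 3 → ℕ) = ![0,1,0] + ![0,0,1] from by decide,
      show (![1,1,1] : Fin 3 → ℕ) = ![1,0,0] + (![0,1,0] + ![0,0,1]) from by decide,
      show (![1,1,0] : Fin 3 → ℕ) = ![1,0,0] + ![0,1,0] from by decide]
  set Q := QA3
  set E1 := Edl (![1,0,0] : Fin 3 → ℕ)
  set E2 := Edl (![0,1,0] : Fin 3 → ℕ)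
  set E3 := Edl (![0,0,1] : Fin 3 → ℕ)
  set E23 := Edl ((![0,1,0] : Fin 3 → ℕ) + ![0,0,1])
  set E123 := Edl ((![1,0,0] : Fin 3 → ℕ) + (![0,1,0] + ![0,0,1]))
  set E12 := Edl ((![1,0,0] : Fin 3 → ℕ) + ![0,1,0])
  calc mulQ Q E1 (mulQ Q E2 E3)
      = mulQ Q E1 (mulQ Q E3 (mulQ Q E23 E2)) := by rw [p23]
    _ = mulQ Q (mulQ Q E1 E3) (mulQ Q E23 E2) := (mulQ_assoc Q _ _ _).symm
    _ = mulQ Q (mulQ Q E3 E1) (mulQ Q E23 E2) := by rw [c13]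
    _ = mulQ Q E3 (mulQ Q E1 (mulQ Q E23 E2)) := mulQ_assoc Q _ _ _
    _ = mulQ Q E3 (mulQ Q (mulQ Q E1 E23) E2) := by rw [mulQ_assoc]
    _ = mulQ Q E3 (mulQ Q (mulQ Q E23 (mulQ Q E123 E1)) E2) := by rw [p123]
    _ = mulQ Q E3 (mulQ Q E23 (mulQ Q (mulQ Q E123 E1) E2)) := by rw [mulQ_assoc]
    _ = mulQ Q E3 (mulQ Q E23 (mulQ Q E123 (mulQ Q E1 E2))) := by rw [mulQ_assoc]
    _ = mulQ Q E3 (mulQ Q E23 (mulQ Q E123 (mulQ Q E2 (mulQ Q E12 E1)))) := by rw [p12]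
    _ = mulQ Q E3 (mulQ Q E23 (mulQ Q (mulQ Q E123 E2) (mulQ Q E12 E1))) := by
        rw [mulQ_assoc]
    _ = mulQ Q E3 (mulQ Q E23 (mulQ Q (mulQ Q E2 E123) (mulQ Q E12 E1))) := by rw [cT2]
    _ = mulQ Q E3 (mulQ Q E23 (mulQ Q E2 (mulQ Q E123 (mulQ Q E12 E1)))) := by
        rw [mulQ_assoc]

end A3
/-- In `Â_Q` for the equioriented `A₃` quiver,
`E(y_{α₁})E(y_{α₂})E(y_{α₃}) =
 E(y_{α₃})E(y_{α₂+α₃})E(y_{α₂})E(y_{α₁+α₂+α₃})E(y_{α₁+α₂})E(y_{α₁})`. -/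
theorem statement10 :
    prodQ QA3 [Edl ![1, 0, 0], Edl ![0, 1, 0], Edl ![0, 0, 1]] =
      prodQ QA3 [Edl ![0, 0, 1], Edl ![0, 1, 1], Edl ![0, 1, 0],
        Edl ![1, 1, 1], Edl ![1, 1, 0], Edl ![1, 0, 0]] := by
  exact statement10'
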